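/- arXiv:1802.02118 — 3 statements merged into one kernel-verified Lean document; each statement's English description precedes it below -/
import Mathlib

section
/- A bijective continuous linear operator T on a locally convex Hausdorff space X is doubly power bounded (the family {T^k : k ∈ ℤ} is equicontinuous) if and only if there exists a family Γ of continuous seminorms generating the topology of X such that p(Tx) = p(x) for all p ∈ Γ and all x ∈ X. -/
/-!
If the integer powers of `T` are equicontinuous, then for a continuous seminorm `q` the
supremum `P = ⨆ k : ℤ, q ∘ T ^ k` is a continuous seminorm dominating `q`, and reindexing the
supremum over the group `ℤ` shows `P ∘ T = P`. Conversely, a generating family that is invariant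
under `T` is also invariant under `T⁻¹`; every continuous seminorm is dominated by some `c • p`
with `p` in the family, and `c • p` then dominates `q ∘ T ^ n` and `q ∘ T⁻¹ ^ n` uniformly in
`n`. This gives the continuity of `T⁻¹` and the equicontinuity of the powers at once.
-/

open scoped ComplexOrder in
theorem PolynormableSpace.of_locallyConvexSpace_real (𝕜 E : Type*) [RCLike 𝕜] [AddCommGroup E]
    [Module 𝕜 E] [Module ℝ E] [IsScalarTower ℝ 𝕜 E] [TopologicalSpace E] [IsTopologicalAddGroup E]
    [ContinuousSMul 𝕜 E] [LocallyConvexSpace ℝ E] : PolynormableSpace 𝕜 E :=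
  have := IsScalarTower.continuousSMul (M := ℝ) (α := E) 𝕜
  have : LocallyConvexSpace 𝕜 E := ⟨fun x => (LocallyConvexSpace.convex_basis (𝕜 := ℝ) x).congr
    (fun _ => by rw [convex_RCLike_iff_convex_real (K := 𝕜)]) fun _ _ => rfl⟩
  inferInstance

namespace Seminorm

variable {𝕜 E : Type*} [NormedField 𝕜] [AddCommGroup E] [Module 𝕜 E] [TopologicalSpace E]

theorem apply_pow_apply_le {p : Seminorm 𝕜 E} {f : E →L[𝕜] E} (hf : ∀ x, p (f x) ≤ p x)
    (n : ℕ) (x : E) : p ((f ^ n) x) ≤ p x := by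
  induction n with
  | zero => rfl
  | succ n ih =>
    rw [pow_succ']
    exact (hf _).trans ih

theorem exists_continuous_forall_apply_le {Γ : Set (Seminorm 𝕜 E)} (hΓc : ∀ p ∈ Γ, Continuous p)
    (hΓ : ∀ q : Seminorm 𝕜 E, Continuous q → ∃ p ∈ Γ, ∃ c : ℝ, 0 < c ∧ ∀ x, q x ≤ c * p x)
    {q : Seminorm 𝕜 E} (hq : Continuous q) :
    ∃ p : Seminorm 𝕜 E, Continuous p ∧
      ∀ f : E → E, (∀ p ∈ Γ, ∀ x, p (f x) ≤ p x) → ∀ x, q (f x) ≤ p x := by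
  obtain ⟨p, hpΓ, c, hc, hqp⟩ := hΓ q hq
  refine ⟨c.toNNReal • p, ?_, fun f hf x => ?_⟩
  · rw [FunLike.coe_smul]
    exact (hΓc p hpΓ).const_smul _
  · calc q (f x) ≤ c * p (f x) := hqp (f x)
      _ ≤ c * p x := by gcongr; exact hf p hpΓ x
      _ = (c.toNNReal • p) x := by
        rw [smul_apply, NNReal.smul_def, Real.coe_toNNReal c hc.le, smul_eq_mul]

variable [IsTopologicalAddGroup E]

theorem exists_continuous_ge_invariant {G : Type*} [Group G] (ρ : G →* Module.End 𝕜 E)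
    {q p : Seminorm 𝕜 E} (hp : Continuous p) (hqp : ∀ g x, q (ρ g x) ≤ p x) :
    ∃ P : Seminorm 𝕜 E, Continuous P ∧ q ≤ P ∧ ∀ g x, P (ρ g x) = P x := by
  have hbdd : BddAbove (Set.range fun g => q.comp (ρ g)) :=
    ⟨p, Set.forall_mem_range.2 fun g x => hqp g x⟩
  have hbdd_apply (x : E) : BddAbove (Set.range fun g => q (ρ g x)) :=
    Seminorm.bddAbove_range_iff.1 hbdd x
  refine ⟨⨆ g, q.comp (ρ g), continuous_of_le hp (ciSup_le fun g x => hqp g x),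
    fun x => ?_, fun h x => ?_⟩
  · rw [Seminorm.iSup_apply hbdd]
    simpa using le_ciSup (hbdd_apply x) 1
  · simp only [Seminorm.iSup_apply hbdd, comp_apply, ← Module.End.mul_apply, ← map_mul]
    exact (Equiv.mulRight h).iSup_comp (g := fun g => q (ρ g x))

theorem exists_invariant_generating_of_pow_bounded (u : (E →L[𝕜] E)ˣ)
    (hu : ∀ q : Seminorm 𝕜 E, Continuous q → ∃ p : Seminorm 𝕜 E, Continuous p ∧
      (∀ (n : ℕ) (x : E), q ((↑u ^ n : E →L[𝕜] E) x) ≤ p x) ∧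
      (∀ (n : ℕ) (x : E), q ((↑u⁻¹ ^ n : E →L[𝕜] E) x) ≤ p x)) :
    ∃ Γ : Set (Seminorm 𝕜 E), (∀ p ∈ Γ, Continuous p) ∧
      (∀ q : Seminorm 𝕜 E, Continuous q → ∃ p ∈ Γ, ∃ c : ℝ, 0 < c ∧ ∀ x, q x ≤ c * p x) ∧
      ∀ p ∈ Γ, ∀ x, p ((u : E →L[𝕜] E) x) = p x := by
  let ρ : Multiplicative ℤ →* Module.End 𝕜 E :=
    ContinuousLinearMap.toLinearMapRingHom.toMonoidHom.comp ((Units.coeHom _).comp (zpowersHom _ u))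
  refine ⟨{P | Continuous P ∧ ∀ x, P ((u : E →L[𝕜] E) x) = P x}, fun P hP => hP.1, fun q hq => ?_,
    fun P hP => hP.2⟩
  obtain ⟨p, hp, hpow, hpow_inv⟩ := hu q hq
  have horbit (g : Multiplicative ℤ) (x : E) : q (ρ g x) ≤ p x := by
    change q ((↑(u ^ g.toAdd) : E →L[𝕜] E) x) ≤ p x
    obtain ⟨n, hn | hn⟩ := Int.eq_nat_or_neg g.toAdd
    · rw [hn, zpow_natCast, Units.val_pow_eq_pow_val]
      exact hpow n x
    · rw [hn, zpow_neg, zpow_natCast, ← inv_pow, Units.val_pow_eq_pow_val]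
      exact hpow_inv n x
  obtain ⟨P, hP, hqP, hPρ⟩ := exists_continuous_ge_invariant ρ hp horbit
  exact ⟨P, ⟨hP, hPρ (.ofAdd 1)⟩, 1, one_pos, fun x => by simpa using hqP x⟩

end Seminorm

theorem LinearMap.continuous_of_forall_seminorm_apply_le {𝕜 E F : Type*} [NontriviallyNormedField 𝕜]
    [AddCommGroup E] [Module 𝕜 E] [TopologicalSpace E] [IsTopologicalAddGroup E]
    [AddCommGroup F] [Module 𝕜 F] [TopologicalSpace F] [PolynormableSpace 𝕜 F] (f : E →ₗ[𝕜] F)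
    (hf : ∀ q : Seminorm 𝕜 F, Continuous q →
      ∃ p : Seminorm 𝕜 E, Continuous p ∧ ∀ x, q (f x) ≤ p x) :
    Continuous f :=
  (PolynormableSpace.withSeminorms 𝕜 F).continuous_of_continuous_comp f fun q => by
    obtain ⟨p, hp, hqp⟩ := hf q.1 q.2
    exact Seminorm.continuous_of_le hp hqp

theorem stmt_4_general (X : Type*) [AddCommGroup X] [Module ℂ X] [Module ℝ X]
    [IsScalarTower ℝ ℂ X] [TopologicalSpace X] [IsTopologicalAddGroup X]
    [ContinuousSMul ℂ X] [LocallyConvexSpace ℝ X]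
    (T : X →L[ℂ] X) (hbij : Function.Bijective T) :
    (∃ S : X →L[ℂ] X, (∀ x, S (T x) = x) ∧ (∀ x, T (S x) = x) ∧
      ∀ q : Seminorm ℂ X, Continuous q → ∃ p : Seminorm ℂ X, Continuous p ∧
        (∀ (n : ℕ) (x : X), q ((T ^ n) x) ≤ p x) ∧
        (∀ (n : ℕ) (x : X), q ((S ^ n) x) ≤ p x)) ↔
    (∃ Γ : Set (Seminorm ℂ X), (∀ p ∈ Γ, Continuous p) ∧
      (∀ q : Seminorm ℂ X, Continuous q →
        ∃ p ∈ Γ, ∃ c : ℝ, 0 < c ∧ ∀ x, q x ≤ c * p x) ∧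
      ∀ p ∈ Γ, ∀ x, p (T x) = p x) := by
  constructor
  · rintro ⟨S, hST, hTS, hbound⟩
    exact Seminorm.exists_invariant_generating_of_pow_bounded
      ⟨T, S, ContinuousLinearMap.ext hTS, ContinuousLinearMap.ext hST⟩ hbound
  · rintro ⟨Γ, hΓc, hΓ, hΓT⟩
    have := PolynormableSpace.of_locallyConvexSpace_real ℂ X
    let e := LinearEquiv.ofBijective T.toLinearMap hbij
    have hΓS (p : Seminorm ℂ X) (hp : p ∈ Γ) (x : X) : p (e.symm x) = p x := by
      rw [← hΓT p hp]
      exact congrArg p (e.apply_symm_apply x)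
    have hS : Continuous e.symm := e.symm.toLinearMap.continuous_of_forall_seminorm_apply_le
      fun q hq => by
        obtain ⟨p, hp, hqp⟩ := Seminorm.exists_continuous_forall_apply_le hΓc hΓ hq
        exact ⟨p, hp, hqp _ fun p hpΓ x => (hΓS p hpΓ x).le⟩
    refine ⟨⟨e.symm.toLinearMap, hS⟩, e.symm_apply_apply, e.apply_symm_apply, fun q hq => ?_⟩
    obtain ⟨p, hp, hqp⟩ := Seminorm.exists_continuous_forall_apply_le hΓc hΓ hq
    exact ⟨p, hp, fun n => hqp _ fun p hpΓ => Seminorm.apply_pow_apply_le (hΓT p hpΓ · |>.le) n,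
      fun n => hqp _ fun p hpΓ => Seminorm.apply_pow_apply_le (hΓS p hpΓ · |>.le) n⟩

/-- A bijective continuous linear operator `T` on a locally convex Hausdorff space is
doubly power bounded (i.e. it has a continuous linear inverse `S` and the family of all
integer powers — the natural powers of `T` together with the natural powers of `S` — is
equicontinuous) if and only if there is a family `Γ` of continuous seminorms generating
the topology such that `p (T x) = p x` for all `p ∈ Γ` and `x`. -/
theorem stmt_4 (X : Type*) [AddCommGroup X] [Module ℂ X] [Module ℝ X]
    [IsScalarTower ℝ ℂ X] [TopologicalSpace X] [IsTopologicalAddGroup X]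
    [ContinuousSMul ℂ X] [T2Space X] [LocallyConvexSpace ℝ X]
    (T : X →L[ℂ] X) (hbij : Function.Bijective T) :
    (∃ S : X →L[ℂ] X, (∀ x, S (T x) = x) ∧ (∀ x, T (S x) = x) ∧
      ∀ q : Seminorm ℂ X, Continuous q → ∃ p : Seminorm ℂ X, Continuous p ∧
        (∀ (n : ℕ) (x : X), q ((T ^ n) x) ≤ p x) ∧
        (∀ (n : ℕ) (x : X), q ((S ^ n) x) ≤ p x)) ↔
    (∃ Γ : Set (Seminorm ℂ X), (∀ p ∈ Γ, Continuous p) ∧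
      (∀ q : Seminorm ℂ X, Continuous q →
        ∃ p ∈ Γ, ∃ c : ℝ, 0 < c ∧ ∀ x, q x ≤ c * p x) ∧
      ∀ p ∈ Γ, ∀ x, p (T x) = p x) :=
  stmt_4_general X T hbij
end

section
/- If X is a Hausdorff locally convex space over ℂ with dim X ≥ 2 and T : X → X is a doubly power bounded continuous linear bijection, then T is not supercyclic. -/
/-!
For doubly power bounded `T`, the supremum of a continuous seminorm over the `ℤ`-orbit of `T` is
a continuous `T`-invariant seminorm dominating it, so continuous invariant seminorms separate
points. If `x` is supercyclic, two such seminorms `r`, `p` are proportional,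
`r y * p x = p y * r x`: both sides are continuous in `y` and agree on the dense set `{c • Tⁿ x}`.
Applied to `p ∘ P(T)` for polynomials `P`, this makes `P ↦ p (P(T) x) / p x` multiplicative, and
Gelfand–Mazur (for normed algebras with multiplicative norm) yields `μ` with `p (T x - μ x) = 0`;
proportionality then forces `T = μ • 1`. So the orbit of `x` lies in the closed line `ℂ x`,
which is not dense when `dim X ≥ 2`.
-/

open Polynomial

theorem Polynomial.map_ne_zero_of_forall_X_sub_C {k M₀ : Type*} [Field k] [IsAlgClosed k]
    [CommMonoidWithZero M₀] [NoZeroDivisors M₀] [Nontrivial M₀] (φ : k[X] →*₀ M₀)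
    (hC : ∀ c ≠ 0, φ (C c) ≠ 0) (hX : ∀ μ, φ (X - C μ) ≠ 0) {P : k[X]} (hP : P ≠ 0) :
    φ P ≠ 0 := by
  rw [← C_leadingCoeff_mul_prod_multiset_X_sub_C (p := P) IsAlgClosed.card_roots_eq_natDegree,
    map_mul, map_multiset_prod, Multiset.map_map]
  refine mul_ne_zero (hC _ (leadingCoeff_ne_zero.2 hP)) (Multiset.prod_ne_zero fun h ↦ ?_)
  obtain ⟨μ, -, hμ⟩ := Multiset.mem_map.1 h
  exact hX μ hμ

namespace Seminorm

section Invariant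

variable {𝕜 E : Type*} [NormedField 𝕜] [AddCommGroup E] [Module 𝕜 E] [TopologicalSpace E]

theorem exists_continuous_invariant_ge [IsTopologicalAddGroup E] (u : (E →L[𝕜] E)ˣ)
    {q p : Seminorm 𝕜 E} (hp : Continuous p)
    (hqp : ∀ (k : ℤ) (y : E), q ((↑(u ^ k) : E →L[𝕜] E) y) ≤ p y) :
    ∃ Q : Seminorm 𝕜 E, Continuous Q ∧ q ≤ Q ∧ ∀ y, Q ((u : E →L[𝕜] E) y) = Q y := by
  set orbit : ℤ → Seminorm 𝕜 E := fun k ↦ q.comp (↑(u ^ k) : E →L[𝕜] E).toLinearMap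
  have bdd : BddAbove (Set.range orbit) := ⟨p, by rintro _ ⟨k, rfl⟩ y; exact hqp k y⟩
  refine ⟨⨆ k, orbit k, continuous_of_le hp (ciSup_le fun k y ↦ hqp k y), fun y ↦ ?_, fun y ↦ ?_⟩
  · simpa [orbit] using (le_ciSup bdd 0 : orbit 0 ≤ _) y
  · simp only [Seminorm.coe_iSup_eq bdd, iSup_apply]
    refine (Equiv.addRight 1).iSup_congr fun k ↦ ?_
    simp [orbit, zpow_add_one]

theorem mul_apply_eq_of_dense_orbit {T : E →L[𝕜] E} {x : E}
    (hx : Dense {y : E | ∃ (c : 𝕜) (n : ℕ), y = c • (T ^ n) x})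
    {r p : Seminorm 𝕜 E} (hr : Continuous r) (hp : Continuous p)
    (hrT : ∀ y, r (T y) = r y) (hpT : ∀ y, p (T y) = p y) (y : E) :
    r y * p x = p y * r x := by
  have pow_invariant (s : Seminorm 𝕜 E) (hs : ∀ y, s (T y) = s y) (n : ℕ) :
      s ((T ^ n) x) = s x := by
    induction n with
    | zero => rfl
    | succ n ih => rw [pow_succ', mul_apply_eq_comp, hs, ih]
  refine congrFun (Continuous.ext_on hx (f := fun y ↦ r y * p x) (g := fun y ↦ p y * r x)
    (by fun_prop) (by fun_prop) ?_) y
  rintro _ ⟨c, n, rfl⟩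
  simp only [map_smul_eq_mul, pow_invariant r hrT, pow_invariant p hpT]
  ring

end Invariant

theorem exists_continuous_apply_ne_zero {𝕜 E : Type*} [RCLike 𝕜] [AddCommGroup E] [Module 𝕜 E]
    [TopologicalSpace E] [IsTopologicalAddGroup E] [ContinuousSMul 𝕜 E] [Module ℝ E]
    [IsScalarTower ℝ 𝕜 E] [T2Space E] [LocallyConvexSpace ℝ E] {w : E} (hw : w ≠ 0) :
    ∃ q : Seminorm 𝕜 E, Continuous q ∧ q w ≠ 0 := by
  have : ContinuousSMul ℝ E := IsScalarTower.continuousSMul 𝕜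
  obtain ⟨f, hf⟩ := SeparatingDual.exists_ne_zero (R := ℝ) hw
  let g : StrongDual 𝕜 E := StrongDual.extendRCLike f
  refine ⟨g.toLinearMap.toSeminorm, g.continuous.norm, fun hgw ↦ hf ?_⟩
  rw [← StrongDual.re_extendRCLike_apply (𝕜 := 𝕜)]
  simp_all [g]

theorem exists_apply_sub_smul_eq_zero {E : Type*} [AddCommGroup E] [Module ℂ E]
    (p : Seminorm ℂ E) (f : Module.End ℂ E) {x : E} (hx : p x ≠ 0)
    (hmul : ∀ (P : ℂ[X]) (y : E), p (aeval f P y) * p x = p y * p (aeval f P x)) :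
    ∃ μ : ℂ, p (f x - μ • x) = 0 := by
  by_contra! hne
  let φ : ℂ[X] →*₀ ℝ :=
    { toFun P := p (aeval f P x) / p x
      map_zero' := by simp
      map_one' := by simp [hx]
      map_mul' P Q := by
        rw [map_mul, Module.End.mul_apply]
        field_simp
        linear_combination hmul P (aeval f Q x) }
  have hφ (P : ℂ[X]) : φ P = p (aeval f P x) / p x := rfl
  have hφC (c : ℂ) : φ (C c) = ‖c‖ := by
    simp [hφ, Algebra.algebraMap_eq_smul_one, map_smul_eq_mul, hx]
  -- `v` is definite because every nonzero polynomial splits into linear factors, none of which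
  -- `φ` kills by `hne`.
  let v : AbsoluteValue ℂ[X] ℝ :=
    { toFun := φ
      map_mul' := φ.map_mul
      nonneg' P := div_nonneg (apply_nonneg _ _) (apply_nonneg _ _)
      eq_zero' P := ⟨fun h ↦ by_contra fun hP ↦ Polynomial.map_ne_zero_of_forall_X_sub_C φ
          (fun c hc ↦ by simpa [hφC] using hc) (fun μ ↦ by simpa [hφ, hx] using hne μ) hP h,
        fun h ↦ by simp [h]⟩
      add_le' P Q := by
        simp only [hφ, map_add, LinearMap.add_apply, ← add_div]
        gcongr
        exact map_add_le_add p _ _ }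
  let _ : NormedAlgebra ℂ (WithAbs v) :=
    { norm_smul_le c P := by
        rw [WithAbs.norm_eq_apply_ofAbs, WithAbs.norm_eq_apply_ofAbs, WithAbs.smul_right_def,
          WithAbs.ofAbs_toAbs, smul_eq_C_mul, v.map_mul]
        exact (congrArg (· * v P.ofAbs) (hφC c)).le }
  have _ : NormOneClass (WithAbs v) := ⟨v.map_one⟩
  have _ : NormMulClass (WithAbs v) := ⟨fun P Q ↦ v.map_mul _ _⟩
  obtain ⟨μ, hμ⟩ := NormedAlgebra.Complex.exists_norm_sub_smul_one_eq_zero (WithAbs.toAbs v X)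
  refine hne μ ((div_eq_zero_iff.1 ?_).resolve_right hx)
  simpa [v, hφ, WithAbs.norm_eq_apply_ofAbs, WithAbs.algebraMap_right_apply] using hμ

end Seminorm

namespace ContinuousLinearMap

section Invariant

variable {𝕜 E : Type*} [NormedField 𝕜] [AddCommGroup E] [Module 𝕜 E] [TopologicalSpace E]
  [IsTopologicalAddGroup E]

theorem exists_invariant_seminorm_ge_of_inverse {T S : E →L[𝕜] E} (hST : ∀ x, S (T x) = x)
    (hTS : ∀ x, T (S x) = x)
    (hbdd : ∀ q : Seminorm 𝕜 E, Continuous q → ∃ p : Seminorm 𝕜 E, Continuous p ∧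
      (∀ (n : ℕ) (x : E), q ((T ^ n) x) ≤ p x) ∧ (∀ (n : ℕ) (x : E), q ((S ^ n) x) ≤ p x))
    (q : Seminorm 𝕜 E) (hq : Continuous q) :
    ∃ Q : Seminorm 𝕜 E, Continuous Q ∧ q ≤ Q ∧ ∀ y, Q (T y) = Q y := by
  let u : (E →L[𝕜] E)ˣ := ⟨T, S, ext hTS, ext hST⟩
  obtain ⟨p, hp, hTp, hSp⟩ := hbdd q hq
  refine Seminorm.exists_continuous_invariant_ge u hp fun k y ↦ ?_
  rcases k with n | n
  · simpa [u] using hTp n y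
  · simpa [u, zpow_negSucc, ← inv_pow] using hSp (n + 1) y

end Invariant

variable {E : Type*} [AddCommGroup E] [Module ℂ E] [TopologicalSpace E] [IsTopologicalAddGroup E]
  [ContinuousSMul ℂ E] [Module ℝ E] [IsScalarTower ℝ ℂ E] [T2Space E] [LocallyConvexSpace ℝ E]

theorem exists_invariant_seminorm_apply_ne_zero {T : E →L[ℂ] E}
    (hinv : ∀ q : Seminorm ℂ E, Continuous q →
      ∃ Q : Seminorm ℂ E, Continuous Q ∧ q ≤ Q ∧ ∀ y, Q (T y) = Q y)
    {w : E} (hw : w ≠ 0) :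
    ∃ Q : Seminorm ℂ E, Continuous Q ∧ (∀ y, Q (T y) = Q y) ∧ Q w ≠ 0 := by
  obtain ⟨q, hq, hqw⟩ := Seminorm.exists_continuous_apply_ne_zero (𝕜 := ℂ) hw
  obtain ⟨Q, hQ, hqQ, hQT⟩ := hinv q hq
  exact ⟨Q, hQ, hQT, ((apply_nonneg q w).lt_of_ne' hqw |>.trans_le (hqQ w)).ne'⟩

theorem exists_eq_smul_one_of_dense_orbit {T : E →L[ℂ] E}
    (hinv : ∀ q : Seminorm ℂ E, Continuous q →
      ∃ Q : Seminorm ℂ E, Continuous Q ∧ q ≤ Q ∧ ∀ y, Q (T y) = Q y)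
    {x : E} (hx0 : x ≠ 0) (hx : Dense {y : E | ∃ (c : ℂ) (n : ℕ), y = c • (T ^ n) x}) :
    ∃ μ : ℂ, T = μ • 1 := by
  obtain ⟨p, hp, hpT, hpx⟩ := exists_invariant_seminorm_apply_ne_zero hinv hx0
  have hmul (P : ℂ[X]) (y : E) :
      p (aeval (T : Module.End ℂ E) P y) * p x = p y * p (aeval (T : Module.End ℂ E) P x) := by
    have hcoe : aeval (T : Module.End ℂ E) P = (aeval T P : E →L[ℂ] E) :=
      aeval_algHom_apply (AlgHom.mk' toLinearMapRingHom fun _ _ ↦ rfl) T P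
    have hcomm : aeval T P * T = T * aeval T P := by
      simpa using ((commute_X P).map (aeval T)).eq.symm
    rw [hcoe]
    refine Seminorm.mul_apply_eq_of_dense_orbit hx (r := p.comp (aeval T P).toLinearMap)
      (hp.comp (aeval T P).continuous) hp (fun y ↦ ?_) hpT y
    simp only [Seminorm.comp_apply, coe_coe, ← mul_apply_eq_comp, hcomm]
    exact hpT _
  obtain ⟨μ, hμ⟩ := Seminorm.exists_apply_sub_smul_eq_zero p T hpx hmul
  refine ⟨μ, ext fun y ↦ sub_eq_zero.1 ?_⟩
  by_contra hw
  obtain ⟨Q, hQ, hQT, hQw⟩ := exists_invariant_seminorm_apply_ne_zero hinv hw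
  have hpw : p (T y - μ • y) = 0 := by
    have := hmul (X - C μ) y
    simp only [map_sub, aeval_X, aeval_C, Algebra.algebraMap_eq_smul_one, LinearMap.sub_apply,
      LinearMap.smul_apply, Module.End.one_apply, coe_coe] at this hμ
    simpa only [hμ, mul_zero, mul_eq_zero, hpx, or_false] using this
  have := Seminorm.mul_apply_eq_of_dense_orbit hx hQ hp hQT hpT (T y - μ • y)
  rw [hpw, zero_mul, mul_eq_zero] at this
  exact this.elim hQw hpx

end ContinuousLinearMap

theorem Submodule.not_dense_of_subset_span_singleton {𝕜 E : Type*} [NontriviallyNormedField 𝕜]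
    [CompleteSpace 𝕜] [AddCommGroup E] [Module 𝕜 E] [TopologicalSpace E] [IsTopologicalAddGroup E]
    [ContinuousSMul 𝕜 E] [T2Space E] (hdim : 2 ≤ Module.rank 𝕜 E) {s : Set E} {x : E}
    (hs : s ⊆ span 𝕜 {x}) : ¬ Dense s := by
  intro hdense
  have htop : span 𝕜 {x} = ⊤ := eq_top_iff'.2 fun y ↦
    closure_minimal hs (span 𝕜 {x}).closed_of_finiteDimensional (hdense.closure_eq ▸ trivial)
  have hrank := rank_span_le (R := 𝕜) ({x} : Set E)
  rw [htop, rank_top, Cardinal.mk_singleton] at hrank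
  exact absurd (hdim.trans hrank) (by norm_num)

theorem stmt_5_general (X : Type*) [AddCommGroup X] [Module ℂ X] [Module ℝ X]
    [IsScalarTower ℝ ℂ X] [TopologicalSpace X] [IsTopologicalAddGroup X]
    [ContinuousSMul ℂ X] [T2Space X] [LocallyConvexSpace ℝ X]
    (hdim : 2 ≤ Module.rank ℂ X) (T : X →L[ℂ] X)
    (hdpb : ∃ S : X →L[ℂ] X, (∀ x, S (T x) = x) ∧ (∀ x, T (S x) = x) ∧
      ∀ q : Seminorm ℂ X, Continuous q → ∃ p : Seminorm ℂ X, Continuous p ∧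
        (∀ (n : ℕ) (x : X), q ((T ^ n) x) ≤ p x) ∧
        (∀ (n : ℕ) (x : X), q ((S ^ n) x) ≤ p x)) :
    ¬ ∃ x : X, Dense {y : X | ∃ (c : ℂ) (n : ℕ), y = c • (T ^ n) x} := by
  rintro ⟨x, hx⟩
  obtain ⟨S, hST, hTS, hbdd⟩ := hdpb
  refine Submodule.not_dense_of_subset_span_singleton (x := x) hdim ?_ hx
  rintro _ ⟨c, n, rfl⟩
  rcases eq_or_ne x 0 with rfl | hx0
  · simp
  obtain ⟨μ, rfl⟩ := ContinuousLinearMap.exists_eq_smul_one_of_dense_orbit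
    (ContinuousLinearMap.exists_invariant_seminorm_ge_of_inverse hST hTS hbdd) hx0 hx
  rw [_root_.smul_pow, one_pow, smul_apply, one_apply_eq_self, smul_smul]
  exact Submodule.smul_mem _ _ (Submodule.mem_span_singleton_self x)

/-- If `dim X ≥ 2` and `T` is doubly power bounded, then `T` is not supercyclic. -/
theorem stmt_5 (X : Type*) [AddCommGroup X] [Module ℂ X] [Module ℝ X]
    [IsScalarTower ℝ ℂ X] [TopologicalSpace X] [IsTopologicalAddGroup X]
    [ContinuousSMul ℂ X] [T2Space X] [LocallyConvexSpace ℝ X]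
    (hdim : 2 ≤ Module.rank ℂ X) (T : X →L[ℂ] X) (hbij : Function.Bijective T)
    (hdpb : ∃ S : X →L[ℂ] X, (∀ x, S (T x) = x) ∧ (∀ x, T (S x) = x) ∧
      ∀ q : Seminorm ℂ X, Continuous q → ∃ p : Seminorm ℂ X, Continuous p ∧
        (∀ (n : ℕ) (x : X), q ((T ^ n) x) ≤ p x) ∧
        (∀ (n : ℕ) (x : X), q ((S ^ n) x) ≤ p x)) :
    ¬ ∃ x : X, Dense {y : X | ∃ (c : ℂ) (n : ℕ), y = c • (T ^ n) x} :=
  stmt_5_general X hdim T hdpb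
end

section
/- Let θ ∈ ℂ with |θ| = 1 and let C_φ : H(𝔻) → H(𝔻) be the composition operator C_φ f = f ∘ φ with φ(z) = θ z on the space of holomorphic functions on the open unit disk with the compact-open topology. Then for every k ∈ ℕ and every f ∈ H(𝔻), sup_{|z| ≤ 1 − 1/k} |C_φ f(z)| = sup_{|z| ≤ 1 − 1/k} |f(z)|; consequently C_φ is a bijective operator with (C_φ^n)_{n∈ℤ} equicontinuous, and C_φ is not supercyclic. -/
/-!
Rotations are isometries of the closed disks `|z| ≤ r`, so `C_φ` and all its integer powers
preserve every seminorm, and `C_φ` is invertible with inverse `f ↦ f(θ⁻¹ ·)`.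
The projective orbit of `f` consists of the functions `c f(θⁿ ·)`, whose moduli are rescaled
rotations of `|f|`. Approximating `1` by `c f(θⁿ ·)` forces `|c f|` to be nearly constant on
`|z| ≤ 1/2`, while approximating `8z` by `c' f(θᵐ ·)` forces `|c' f|` to be small at `0` and
large at `θᵐ/2`; comparing `|f(θᵐ/2)| / |f(0)|` in the two cases gives a contradiction.
-/

open Metric

section Rotation

variable {u : ℂ}

lemma image_mul_closedBall_zero (hu : ‖u‖ = 1) (r : ℝ) :
    (u * ·) '' closedBall (0 : ℂ) r = closedBall 0 r := by
  have hu0 : u ≠ 0 := norm_ne_zero_iff.mp (by rw [hu]; exact one_ne_zero)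
  change (u • ·) '' _ = _
  rw [Set.image_smul, smul_closedBall' hu0, smul_zero, hu, one_mul]

lemma image_norm_comp_mul_closedBall_zero (hu : ‖u‖ = 1) (r : ℝ) (f : ℂ → ℂ) :
    (fun z => ‖f (u * z)‖) '' closedBall 0 r = (fun z => ‖f z‖) '' closedBall 0 r := by
  conv_rhs => rw [← image_mul_closedBall_zero hu r]
  rw [Set.image_image]

lemma mapsTo_mul_ball_zero (hu : ‖u‖ = 1) (r : ℝ) :
    Set.MapsTo (u * ·) (ball (0 : ℂ) r) (ball 0 r) := by
  intro z hz
  simpa [norm_mul, hu] using hz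

lemma DifferentiableOn.comp_mul_ball_zero (hu : ‖u‖ = 1) {r : ℝ} {f : ℂ → ℂ}
    (hf : DifferentiableOn ℂ f (ball 0 r)) :
    DifferentiableOn ℂ (fun z => f (u * z)) (ball 0 r) :=
  hf.comp (differentiable_id.const_mul u).differentiableOn (mapsTo_mul_ball_zero hu r)

end Rotation

lemma norm_lt_of_sSup_image_norm_lt {K : Set ℂ} (hK : IsCompact K) {h : ℂ → ℂ}
    (hh : ContinuousOn h K) {ε : ℝ} (hlt : sSup ((fun z => ‖h z‖) '' K) < ε)
    {z : ℂ} (hz : z ∈ K) : ‖h z‖ < ε :=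
  (le_csSup (hK.image_of_continuousOn hh.norm).bddAbove ⟨z, hz, rfl⟩).trans_lt hlt

lemma not_approx_one_and_eight_mul_by_rotations (f : ℂ → ℂ) {u₁ u₂ : ℂ}
    (hu₁ : ‖u₁‖ = 1) (hu₂ : ‖u₂‖ = 1) (c₁ c₂ : ℂ)
    (h₁ : ∀ z ∈ closedBall (0 : ℂ) (1 / 2), ‖c₁ * f (u₁ * z) - 1‖ < 1 / 2)
    (h₂ : ∀ z ∈ closedBall (0 : ℂ) (1 / 2), ‖c₂ * f (u₂ * z) - 8 * z‖ < 1 / 2) : False := by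
  have hu₁0 : u₁ ≠ 0 := norm_ne_zero_iff.mp (by rw [hu₁]; exact one_ne_zero)
  set w : ℂ := u₂ * (1 / 2)
  have hw : ‖u₁⁻¹ * w‖ = 1 / 2 := by simp [w, hu₁, hu₂]
  have e₁ : ‖c₁ * f 0 - 1‖ < 1 / 2 := by simpa using h₁ 0 (by simp)
  have e₂ : ‖c₁ * f w - 1‖ < 1 / 2 := by
    simpa [mul_inv_cancel_left₀ hu₁0] using h₁ (u₁⁻¹ * w) (by rw [mem_closedBall_zero_iff, hw])
  have e₃ : ‖c₂ * f 0‖ < 1 / 2 := by simpa using h₂ 0 (by simp)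
  have e₄ : ‖c₂ * f w - 4‖ < 1 / 2 := by
    have := h₂ (1 / 2) (by simp)
    rwa [show (8 : ℂ) * (1 / 2) = 4 by norm_num] at this
  have b₁ := abs_lt.mp ((abs_norm_sub_norm_le _ _).trans_lt e₁)
  have b₂ := abs_lt.mp ((abs_norm_sub_norm_le _ _).trans_lt e₂)
  have b₄ := abs_lt.mp ((abs_norm_sub_norm_le _ _).trans_lt e₄)
  simp only [norm_mul, norm_one, Complex.norm_ofNat] at b₁ b₂ b₄ e₃
  have hprod : ‖c₁‖ * ‖f 0‖ * (‖c₂‖ * ‖f w‖) = ‖c₁‖ * ‖f w‖ * (‖c₂‖ * ‖f 0‖) := by ring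
  have hlow : 7 / 4 < ‖c₁‖ * ‖f 0‖ * (‖c₂‖ * ‖f w‖) := by nlinarith
  have hhigh : ‖c₁‖ * ‖f w‖ * (‖c₂‖ * ‖f 0‖) < 3 / 4 := by
    nlinarith [mul_nonneg (norm_nonneg c₁) (norm_nonneg (f w)),
      mul_nonneg (norm_nonneg c₂) (norm_nonneg (f 0))]
  linarith

/-- For a rotation `φ(z) = θ z` with `|θ| = 1`, the composition operator
`C_φ f = f ∘ φ` on `H(𝔻)` preserves each seminorm `p_k f = sup_{|z| ≤ 1 - 1/k} |f z|`;
consequently `C_φ` is bijective on `H(𝔻)`, its integer powers are `Γ`-isometries (hence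
`(C_φ^n)_{n ∈ ℤ}` is equicontinuous), and `C_φ` is not supercyclic. -/
theorem stmt_14 (θ : ℂ) (hθ : ‖θ‖ = 1)
    (H : Set (ℂ → ℂ)) (hH : H = {f | DifferentiableOn ℂ f (ball (0 : ℂ) 1)})
    (p : ℕ → (ℂ → ℂ) → ℝ)
    (hp : ∀ (k : ℕ) (f : ℂ → ℂ),
      p k f = sSup ((fun z => ‖f z‖) '' closedBall (0 : ℂ) (1 - 1 / (k + 1))))
    (C : (ℂ → ℂ) → (ℂ → ℂ)) (hC : ∀ (f : ℂ → ℂ) (z : ℂ), C f z = f (θ * z)) :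
    (∀ (k : ℕ) (f : ℂ → ℂ), f ∈ H → p k (C f) = p k f) ∧
    Set.BijOn C H H ∧
    (∀ (k : ℕ) (n : ℤ) (f : ℂ → ℂ), f ∈ H → p k (fun z => f (θ ^ n * z)) = p k f) ∧
    ¬ ∃ f ∈ H, ∀ g ∈ H, ∀ (k : ℕ), ∀ ε > (0 : ℝ), ∃ (c : ℂ) (n : ℕ),
        p k (fun z => c * f (θ ^ n * z) - g z) < ε := by
  obtain rfl : C = fun f z => f (θ * z) := funext fun f => funext (hC f)
  subst hH
  have hθ0 : θ ≠ 0 := norm_ne_zero_iff.mp (by rw [hθ]; exact one_ne_zero)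
  have hθinv : ‖θ⁻¹‖ = 1 := by rw [norm_inv, hθ, inv_one]
  have hθpow (n : ℕ) : ‖θ ^ n‖ = 1 := by rw [norm_pow, hθ, one_pow]
  refine ⟨fun k f _ => by rw [hp, hp, image_norm_comp_mul_closedBall_zero hθ],
    ?_, fun k n f _ => by
      rw [hp, hp, image_norm_comp_mul_closedBall_zero (by rw [norm_zpow, hθ, one_zpow])], ?_⟩
  · refine Set.InvOn.bijOn (f' := fun f z => f (θ⁻¹ * z)) ⟨?_, ?_⟩
      (fun f hf => hf.comp_mul_ball_zero hθ) (fun f hf => hf.comp_mul_ball_zero hθinv)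
    all_goals intro f _; funext z; simp [hθ0]
  · rintro ⟨f, hf, hdense⟩
    have hK : IsCompact (closedBall (0 : ℂ) (1 / 2)) := isCompact_closedBall 0 _
    have hsub : closedBall (0 : ℂ) (1 / 2) ⊆ ball 0 1 := closedBall_subset_ball (by norm_num)
    have hr : (1 : ℝ) - 1 / ((1 : ℕ) + 1) = 1 / 2 := by norm_num
    obtain ⟨c₁, n₁, h₁⟩ := hdense _ (differentiableOn_const 1) 1 (1 / 2) (by norm_num)
    obtain ⟨c₂, n₂, h₂⟩ := hdense _ (differentiable_id.const_mul (8 : ℂ)).differentiableOn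
      1 (1 / 2) (by norm_num)
    rw [hp, hr] at h₁ h₂
    refine not_approx_one_and_eight_mul_by_rotations f (hθpow n₁) (hθpow n₂) c₁ c₂
      (fun z hz => norm_lt_of_sSup_image_norm_lt hK ?_ h₁ hz)
      (fun z hz => norm_lt_of_sSup_image_norm_lt hK ?_ h₂ hz)
    · exact (((hf.comp_mul_ball_zero (hθpow n₁)).const_mul c₁).sub_const 1).continuousOn.mono hsub
    · exact (((hf.comp_mul_ball_zero (hθpow n₂)).const_mul c₂).sub
        (differentiable_id.const_mul (8 : ℂ)).differentiableOn).continuousOn.mono hsub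
end
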